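/- Let d ≥ 1. For every subset J ⊆ {0, 1, …, d−2}, let F_J = {s ∈ C_d : s_j = s_{j+1} for all j ∈ J}, with the convention s_0 = 0 (the sets F_J are exactly the faces of the cone C_d). Then ξ^d_1(F_J) = F_J; that is, ξ^d_1 maps every face of C_d onto itself. -/

import Mathlib

/-!
On `C_d` the map `ξ^d_k` acts coordinatewise: if `r` is the first index with `s_r ≠ 0` and
`c = (s_r^r, …, s_{d-1}^r)`, then `ξ^d_k(s)_i = φ(s_i)` for the single function
`φ(x) = ε^{r,d-r}_c(q^{-kr} x^r)`, which is strictly increasing on `[0, ∞)` with `φ(0) = 0`.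
The face equations `s_j = s_{j+1}` (with `s_0 = 0`) are preserved and reflected by such a `φ`,
so `ξ^d_1` maps `F_J` into `F_J`, and every preimage in `C_d` of a point of `F_J` lies in `F_J`.

It remains to see that `ξ^d_1` maps `C_d` onto itself. Each `ε^{r,m}_c` with `c > 0` is locally a
finite sum, continuous, strictly increasing, the identity on `(-∞, 0]` and `≥ id`, hence a
bijection of `[0, ∞)`. Given `t ∈ C_d` with first nonzero index `r`, solve
`ε^{r,m}_{(q^r x_0, …, q^r x_{m-1})}(x_m) = t_{r+m}` recursively and put `s_i = q x_{i-r}^{1/r}`.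
The `x_m` increase with `m`, so in `ε^{r,d-r}_{(s_r^r, …)}(x_m)` every `y` with `y_t ≠ 0` for some
`t ≥ m` has weight `≥ q^r x_t ≥ x_m` and contributes nothing; hence `ξ^d_1(s) = t`.
-/

noncomputable section

open scoped BigOperators

open Classical in
/-- The absolute value `|y| = q^{deg y}` (and `|0| = 0`) on `A = F_q[T]`. -/
def absA (Fq : Type) [Field Fq] [Fintype Fq] (y : Polynomial Fq) : ℝ :=
  if y = 0 then 0 else (Fintype.card Fq : ℝ) ^ y.natDegree

/-- `ε^{r,n}_s(x) = x + Σ_{y ∈ A^n, y ≠ 0} max(x − max_{1≤i≤n} |y_i|^r·s_i, 0)`.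
(For each `x` only finitely many summands are nonzero, so the `tsum` agrees with the
intended sum; the inner `⨆` over the finite type `Fin n` is the maximum.) -/
def epsFun (Fq : Type) [Field Fq] [Fintype Fq] (r n : ℕ) (s : Fin n → ℝ) (x : ℝ) : ℝ :=
  x + ∑' y : {y : Fin n → Polynomial Fq // y ≠ 0},
      max (x - ⨆ i : Fin n, (absA Fq (y.1 i)) ^ r * s i) 0

/-- `δ^{r,n}(s) = ((q−1)/(q^{r+n}−1))·Σ_{i=1}^n q^{n−i}·ε^{r,i−1}_{(s_1,…,s_{i−1})}(s_i)`. -/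
def deltaFun (Fq : Type) [Field Fq] [Fintype Fq] (r n : ℕ) (s : Fin n → ℝ) : ℝ :=
  ((Fintype.card Fq : ℝ) - 1) / ((Fintype.card Fq : ℝ) ^ (r + n) - 1) *
    ∑ i : Fin n, (Fintype.card Fq : ℝ) ^ (n - 1 - (i : ℕ)) *
      epsFun Fq r i (fun j : Fin (i : ℕ) => s (Fin.castLE i.isLt.le j)) (s i)

/-- `ε̂^{r,n}_s(x) = ε^{r,n}_s(x) − δ^{r,n}(s)`. -/
def epsHat (Fq : Type) [Field Fq] [Fintype Fq] (r n : ℕ) (s : Fin n → ℝ) (x : ℝ) : ℝ :=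
  epsFun Fq r n s x - deltaFun Fq r n s

/-- The cone `C_d = {(s_1,…,s_{d−1}) ∈ ℝ^{d−1} : 0 ≤ s_1 ≤ … ≤ s_{d−1}}`. -/
def Cd (d : ℕ) : Set (Fin (d - 1) → ℝ) :=
  {s | (∀ i, 0 ≤ s i) ∧ Monotone s}

open Classical in
/-- The map `ξ^d_k : C_d → ℝ^{d−1}`: with `r = r(s)` the least (1-based) index with
`s_r ≠ 0`, it is given by `ξ^d_k(s)_i = 0` for `i < r` and
`ξ^d_k(s)_i = ε^{r,d−r}_{(s_r^r,…,s_{d−1}^r)}(q^{−kr}·s_i^r)` for `r ≤ i ≤ d−1`. -/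
def xiFun (Fq : Type) [Field Fq] [Fintype Fq] (d k : ℕ)
    (s : Fin (d - 1) → ℝ) : Fin (d - 1) → ℝ := fun i =>
  if hz : ∃ j : Fin (d - 1), s j ≠ 0 then
    let j0 : Fin (d - 1) := (Finset.univ.filter (fun j : Fin (d - 1) => s j ≠ 0)).min'
      (by obtain ⟨j, hj⟩ := hz
          exact ⟨j, Finset.mem_filter.mpr ⟨Finset.mem_univ j, hj⟩⟩)
    if (i : ℕ) < (j0 : ℕ) then 0
    else
      epsFun Fq ((j0 : ℕ) + 1) (d - 1 - (j0 : ℕ))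
        (fun t : Fin (d - 1 - (j0 : ℕ)) =>
          (s ⟨(j0 : ℕ) + (t : ℕ), by have := t.isLt; have := j0.isLt; omega⟩) ^ ((j0 : ℕ) + 1))
        (((Fintype.card Fq : ℝ) ^ (k * ((j0 : ℕ) + 1)))⁻¹ * (s i) ^ ((j0 : ℕ) + 1))
  else 0

/-- The 1-based coordinates `s_1, …, s_{d−1}` of `s`, extended by the convention
`s_0 = 0` (and `0` outside the range). -/
def padSeq (d : ℕ) (s : Fin (d - 1) → ℝ) (j : ℕ) : ℝ :=
  if h : 1 ≤ j ∧ j ≤ d - 1 then s ⟨j - 1, by omega⟩ else 0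

/-- The face `F_J = {s ∈ C_d : s_j = s_{j+1} for all j ∈ J}` of `C_d`, with the convention
`s_0 = 0`. -/
def faceJ (d : ℕ) (J : Set ℕ) : Set (Fin (d - 1) → ℝ) :=
  {s | s ∈ Cd d ∧ ∀ j ∈ J, padSeq d s j = padSeq d s (j + 1)}


open Polynomial

theorem Polynomial.finite_setOf_natDegree_le (R : Type*) [Semiring R] [Finite R] (N : ℕ) :
    {p : R[X] | p.natDegree ≤ N}.Finite := by
  have : Finite (degreeLT R (N + 1)) := .of_equiv _ (degreeLTEquiv R (N + 1)).toEquiv.symm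
  refine (degreeLT R (N + 1) : Set R[X]).toFinite.subset fun p hp => mem_degreeLT.2 ?_
  exact degree_le_natDegree.trans_lt (WithBot.coe_lt_coe.2 (Nat.lt_succ_of_le hp))

variable {Fq : Type} [Field Fq] [Fintype Fq]

local notation "q" => (Fintype.card Fq : ℝ)

lemma one_lt_card_real : 1 < q := by
  have := Fintype.one_lt_card (α := Fq)
  exact_mod_cast this

lemma card_pos_real : 0 < q := zero_lt_one.trans one_lt_card_real

lemma one_le_card_pow (r : ℕ) : 1 ≤ q ^ r := one_le_pow₀ one_lt_card_real.le

lemma card_pow_pos (r : ℕ) : 0 < q ^ r := pow_pos card_pos_real r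

lemma absA_zero : absA Fq 0 = 0 := if_pos rfl

lemma absA_of_ne_zero {y : Fq[X]} (hy : y ≠ 0) : absA Fq y = q ^ y.natDegree := if_neg hy

lemma absA_nonneg (y : Fq[X]) : 0 ≤ absA Fq y := by
  unfold absA; split <;> positivity

lemma one_le_absA {y : Fq[X]} (hy : y ≠ 0) : 1 ≤ absA Fq y := by
  rw [absA_of_ne_zero hy]; exact one_le_card_pow _

lemma absA_le_absA_pow (y : Fq[X]) {r : ℕ} (hr : r ≠ 0) : absA Fq y ≤ absA Fq y ^ r := by
  by_cases hy : y = 0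
  · simp [hy, absA_zero, zero_pow hr]
  · exact le_self_pow₀ (one_le_absA hy) hr

lemma finite_setOf_absA_le (B : ℝ) : {y : Fq[X] | absA Fq y ≤ B}.Finite := by
  refine (finite_setOf_natDegree_le Fq ⌈B⌉₊).subset fun y (hy : absA Fq y ≤ B) => ?_
  by_cases hy0 : y = 0
  · simp [hy0]
  · have hdeg : (y.natDegree : ℝ) < q ^ y.natDegree := by
      exact_mod_cast Nat.lt_pow_self (Fintype.one_lt_card (α := Fq))
    rw [absA_of_ne_zero hy0] at hy
    exact_mod_cast (hdeg.trans_le hy).le.trans (Nat.le_ceil B)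

section WeightedSup

variable {r n : ℕ} {c : Fin n → ℝ}

def weightedSup (r : ℕ) (c : Fin n → ℝ) (y : Fin n → Fq[X]) : ℝ :=
  ⨆ i, absA Fq (y i) ^ r * c i

lemma le_weightedSup (y : Fin n → Fq[X]) (i : Fin n) :
    absA Fq (y i) ^ r * c i ≤ weightedSup r c y :=
  Finite.le_ciSup (fun i => absA Fq (y i) ^ r * c i) i

lemma weightedSup_nonneg (hc : ∀ i, 0 ≤ c i) (y : Fin n → Fq[X]) : 0 ≤ weightedSup r c y :=
  Real.iSup_nonneg fun i => mul_nonneg (pow_nonneg (absA_nonneg _) _) (hc i)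

lemma le_weightedSup_of_ne_zero {y : Fin n → Fq[X]} {i : Fin n} (hc : 0 ≤ c i)
    (hy : y i ≠ 0) : c i ≤ weightedSup r c y :=
  (le_mul_of_one_le_left hc (one_le_pow₀ (one_le_absA hy))).trans (le_weightedSup y i)

lemma finite_setOf_weightedSup_lt (hr : r ≠ 0) (hc : ∀ i, 0 < c i) (B : ℝ) :
    {y : {y : Fin n → Fq[X] // y ≠ 0} | weightedSup r c y.1 < B}.Finite := by
  refine ((Set.Finite.pi fun i => finite_setOf_absA_le (B / c i)).preimage
    Subtype.val_injective.injOn).subset fun y (hy : weightedSup r c y.1 < B) i _ => ?_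
  show absA Fq (y.1 i) ≤ B / c i
  rw [le_div_iff₀ (hc i)]
  calc absA Fq (y.1 i) * c i ≤ absA Fq (y.1 i) ^ r * c i :=
        mul_le_mul_of_nonneg_right (absA_le_absA_pow _ hr) (hc i).le
    _ ≤ B := (le_weightedSup y.1 i).trans hy.le

end WeightedSup

section EpsFun

variable {r n : ℕ} {c : Fin n → ℝ}

lemma epsFun_eq (x : ℝ) : epsFun Fq r n c x =
    x + ∑' y : {y : Fin n → Fq[X] // y ≠ 0}, max (x - weightedSup r c y.1) 0 := rfl

lemma summable_epsFun_summand (hr : r ≠ 0) (hc : ∀ i, 0 < c i) (x : ℝ) :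
    Summable fun y : {y : Fin n → Fq[X] // y ≠ 0} => max (x - weightedSup r c y.1) 0 := by
  refine summable_of_hasFiniteSupport <|
    (finite_setOf_weightedSup_lt hr hc x).subset fun y hy => ?_
  by_contra hlt
  exact hy (max_eq_right (by simpa using hlt))

lemma self_le_epsFun (x : ℝ) : x ≤ epsFun Fq r n c x :=
  le_add_of_nonneg_right (tsum_nonneg fun _ => le_max_right _ _)

lemma epsFun_of_nonpos (hc : ∀ i, 0 ≤ c i) {x : ℝ} (hx : x ≤ 0) :
    epsFun Fq r n c x = x := by
  have hzero (y : {y : Fin n → Fq[X] // y ≠ 0}) : max (x - weightedSup r c y.1) 0 = 0 :=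
    max_eq_right (by linarith [weightedSup_nonneg (r := r) hc y.1])
  simp_rw [epsFun_eq, hzero, tsum_zero, add_zero]

lemma epsFun_strictMono (hr : r ≠ 0) (hc : ∀ i, 0 < c i) : StrictMono (epsFun Fq r n c) :=
  fun x x' h => add_lt_add_of_lt_of_le h <|
    (summable_epsFun_summand hr hc x).tsum_le_tsum
      (fun _ => max_le_max (sub_le_sub_right h.le _) le_rfl) (summable_epsFun_summand hr hc x')

lemma continuousOn_epsFun (hr : r ≠ 0) (hc : ∀ i, 0 < c i) (B : ℝ) :
    ContinuousOn (epsFun Fq r n c) (Set.Iic B) := by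
  set S := (finite_setOf_weightedSup_lt (Fq := Fq) hr hc B).toFinset
  have hcont : Continuous fun x => x + ∑ y ∈ S, max (x - weightedSup r c y.1) 0 := by fun_prop
  refine hcont.continuousOn.congr fun x (hx : x ≤ B) => ?_
  rw [epsFun_eq, tsum_eq_sum]
  intro y hy
  simp only [S, Set.Finite.mem_toFinset, Set.mem_ofPred_eq, not_lt] at hy
  exact max_eq_right (by linarith)

lemma exists_epsFun_eq (hr : r ≠ 0) (hc : ∀ i, 0 < c i) {τ : ℝ} (hτ : 0 ≤ τ) :
    ∃ x, epsFun Fq r n c x = τ := by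
  have hmem : τ ∈ Set.Icc (epsFun Fq r n c 0) (epsFun Fq r n c τ) :=
    ⟨(epsFun_of_nonpos (fun i => (hc i).le) le_rfl).trans_le hτ, self_le_epsFun τ⟩
  obtain ⟨x, -, hx⟩ :=
    intermediate_value_Icc hτ ((continuousOn_epsFun hr hc τ).mono Set.Icc_subset_Iic_self) hmem
  exact ⟨x, hx⟩

end EpsFun

section Prefix

variable {r i0 n : ℕ} {c : Fin n → ℝ}

lemma weightedSup_extend_castLE (hr : r ≠ 0) (hc : ∀ i, 0 ≤ c i) (h : i0 ≤ n)
    (w : Fin i0 → Fq[X]) :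
    weightedSup r c (Function.extend (Fin.castLE h) w 0) =
      weightedSup r (fun j => c (Fin.castLE h j)) w := by
  apply le_antisymm
  · refine Real.iSup_le (fun t => ?_) (weightedSup_nonneg (fun j => hc _) w)
    by_cases ht : ∃ j, Fin.castLE h j = t
    · obtain ⟨j, rfl⟩ := ht
      rw [(Fin.castLE_injective h).extend_apply]
      exact le_weightedSup (c := fun j => c (Fin.castLE h j)) w j
    · rw [Function.extend_apply' _ _ _ ht, Pi.zero_apply, absA_zero, zero_pow hr, zero_mul]
      exact weightedSup_nonneg (fun j => hc _) w
  · refine Real.iSup_le (fun j => ?_) (weightedSup_nonneg hc _)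
    rw [← (Fin.castLE_injective h).extend_apply w 0 j]
    exact le_weightedSup _ _

lemma extend_castLE_comp_castLE {α : Type*} [Zero α] (h : i0 ≤ n) {y : Fin n → α}
    (hy : ∀ t : Fin n, i0 ≤ (t : ℕ) → y t = 0) :
    Function.extend (Fin.castLE h) (y ∘ Fin.castLE h) 0 = y := by
  funext t
  by_cases ht : (t : ℕ) < i0
  · exact (Fin.castLE_injective h).extend_apply _ _ ⟨t, ht⟩
  · rw [Function.extend_apply' _ _ _ fun ⟨j, hj⟩ => ht (hj ▸ j.isLt), hy t (not_lt.1 ht)]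
    rfl

/-- If `x ≤ c_t` for all `t ≥ i0`, no `y` with `y_t ≠ 0` for such a `t` contributes to
`epsFun _ r n c x`, so only the first `i0` weights matter. -/
lemma epsFun_eq_epsFun_castLE (hr : r ≠ 0) (hc : ∀ i, 0 < c i) (h : i0 ≤ n) {x : ℝ}
    (hx : ∀ t : Fin n, i0 ≤ (t : ℕ) → x ≤ c t) :
    epsFun Fq r n c x = epsFun Fq r i0 (fun j => c (Fin.castLE h j)) x := by
  let ext (w : {w : Fin i0 → Fq[X] // w ≠ 0}) : {y : Fin n → Fq[X] // y ≠ 0} :=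
    ⟨Function.extend (Fin.castLE h) w.1 0, fun h0 =>
      w.2 (by rw [← Function.extend_comp (Fin.castLE_injective h) w.1 0, h0]; rfl)⟩
  have hext : Function.Injective ext := fun w w' hw =>
    Subtype.ext (Function.extend_injective (Fin.castLE_injective h) 0 (congrArg Subtype.val hw))
  rw [epsFun_eq, epsFun_eq, ← hext.tsum_eq]
  · simp only [ext, weightedSup_extend_castLE hr (fun i => (hc i).le)]
  intro y hy
  have hlt : weightedSup r c y.1 < x := by
    by_contra hle
    exact hy (max_eq_right (by linarith))
  have htail (t : Fin n) (ht : i0 ≤ (t : ℕ)) : y.1 t = 0 := by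
    by_contra hne
    linarith [le_weightedSup_of_ne_zero (r := r) (hc t).le hne, hx t ht]
  have hy' := extend_castLE_comp_castLE h htail
  refine ⟨⟨y.1 ∘ Fin.castLE h, fun h0 => y.2 ?_⟩, Subtype.ext hy'⟩
  rw [← hy', h0]
  exact Function.extend_const _ 0

end Prefix

section EpsInvSeq

variable (Fq) in
/-- The sequence `x` with `ε^{r,m}_{(q^r x_0, …, q^r x_{m-1})}(x_m) = τ_m`, solved for `x_m`
one index at a time. -/
def epsInvSeq (r : ℕ) (τ : ℕ → ℝ) : ℕ → ℝ
  | m => Function.invFun (epsFun Fq r m fun j : Fin m => q ^ r * epsInvSeq r τ j) (τ m)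
decreasing_by exact j.isLt

variable {r : ℕ} {τ : ℕ → ℝ}

lemma epsInvSeq_spec (hr : r ≠ 0) (hτ : ∀ m, 0 < τ m) (m : ℕ) :
    0 < epsInvSeq Fq r τ m ∧ epsFun Fq r m (fun j : Fin m => q ^ r * epsInvSeq Fq r τ j)
      (epsInvSeq Fq r τ m) = τ m := by
  induction m using Nat.strong_induction_on with
  | _ m ih =>
    have hc (j : Fin m) : 0 < q ^ r * epsInvSeq Fq r τ j :=
      mul_pos (card_pow_pos r) (ih j j.isLt).1
    have heq : epsFun Fq r m (fun j : Fin m => q ^ r * epsInvSeq Fq r τ j)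
        (epsInvSeq Fq r τ m) = τ m := by
      rw [epsInvSeq]
      exact Function.invFun_eq (exists_epsFun_eq hr hc (hτ m).le)
    refine ⟨lt_of_not_ge fun hle => ?_, heq⟩
    rw [epsFun_of_nonpos (fun j => (hc j).le) hle] at heq
    linarith [hτ m]

lemma epsInvSeq_monotone (hr : r ≠ 0) (hτ : ∀ m, 0 < τ m) (hτm : Monotone τ) :
    Monotone (epsInvSeq Fq r τ) := by
  refine monotone_nat_of_le_succ fun m => le_of_not_gt fun hlt => ?_
  set x := epsInvSeq Fq r τ
  have hx (j : ℕ) : 0 < q ^ r * x j :=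
    mul_pos (card_pow_pos r) (epsInvSeq_spec hr hτ j).1
  have hreduce : epsFun Fq r (m + 1) (fun j : Fin (m + 1) => q ^ r * x j) (x (m + 1)) =
      epsFun Fq r m (fun j : Fin m => q ^ r * x j) (x (m + 1)) :=
    epsFun_eq_epsFun_castLE hr (fun j => hx j) m.le_succ fun t ht => by
      rw [show (t : ℕ) = m by omega]
      exact hlt.le.trans (le_mul_of_one_le_left (epsInvSeq_spec hr hτ _).1.le
        (one_le_card_pow r))
  have hstrict := epsFun_strictMono (Fq := Fq) hr (fun j : Fin m => hx j) hlt
  rw [← hreduce, (epsInvSeq_spec hr hτ (m + 1)).2, (epsInvSeq_spec hr hτ m).2] at hstrict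
  linarith [hτm m.le_succ]

lemma epsFun_epsInvSeq (hr : r ≠ 0) (hτ : ∀ m, 0 < τ m) (hτm : Monotone τ) {m n : ℕ}
    (hmn : m ≤ n) :
    epsFun Fq r n (fun t : Fin n => q ^ r * epsInvSeq Fq r τ t) (epsInvSeq Fq r τ m) = τ m := by
  have hx (j : ℕ) : 0 < epsInvSeq Fq r τ j := (epsInvSeq_spec hr hτ j).1
  rw [epsFun_eq_epsFun_castLE hr (fun t => mul_pos (card_pow_pos r) (hx t)) hmn
    fun t ht => (epsInvSeq_monotone hr hτ hτm ht).trans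
      (le_mul_of_one_le_left (hx t).le (one_le_card_pow r))]
  exact (epsInvSeq_spec hr hτ m).2

end EpsInvSeq

section Xi

variable {d k : ℕ} {s : Fin (d - 1) → ℝ}

lemma exists_first_ne_zero (hz : ∃ j, s j ≠ 0) : ∃ j0, s j0 ≠ 0 ∧ ∀ j < j0, s j = 0 := by
  obtain ⟨j0, hj0, hmin⟩ := wellFounded_lt.has_min {j | s j ≠ 0} hz
  exact ⟨j0, hj0, fun j hj => not_not.1 fun h => hmin j h hj⟩

lemma pos_of_mem_Cd (hs : s ∈ Cd d) {j0 i : Fin (d - 1)} (hj0 : s j0 ≠ 0) (hi : j0 ≤ i) :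
    0 < s i :=
  ((hs.1 j0).lt_of_ne' hj0).trans_le (hs.2 hi)

lemma xiFun_apply_of_forall_lt {j0 : Fin (d - 1)} (hj0 : s j0 ≠ 0) (hlt : ∀ j < j0, s j = 0)
    (i : Fin (d - 1)) :
    xiFun Fq d k s i =
      if (i : ℕ) < j0 then 0
      else epsFun Fq (j0 + 1) (d - 1 - j0)
        (fun t : Fin (d - 1 - j0) => s ⟨j0 + t, Nat.add_lt_of_lt_sub' t.isLt⟩ ^ ((j0 : ℕ) + 1))
        ((q ^ (k * ((j0 : ℕ) + 1)))⁻¹ * s i ^ ((j0 : ℕ) + 1)) := by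
  have hz : ∃ j, s j ≠ 0 := ⟨j0, hj0⟩
  unfold xiFun
  rw [dif_pos hz]
  generalize_proofs hne
  obtain rfl : (Finset.univ.filter fun j => s j ≠ 0).min' hne = j0 :=
    le_antisymm (Finset.min'_le _ _ (by simp [hj0])) <| Finset.le_min' _ _ _ fun j hj =>
      le_of_not_gt fun hj' => (Finset.mem_filter.1 hj).2 (hlt j hj')
  rfl

lemma xiFun_eq_self_of_forall_eq_zero (hs : ∀ j, s j = 0) : xiFun Fq d k s = s := by
  funext i
  simp [xiFun, hs]

lemma exists_strictMonoOn_xiFun_eq_comp (hs : s ∈ Cd d) :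
    ∃ φ : ℝ → ℝ, StrictMonoOn φ (Set.Ici 0) ∧ φ 0 = 0 ∧ xiFun Fq d k s = φ ∘ s := by
  by_cases hz : ∃ j, s j ≠ 0
  swap
  · push Not at hz
    exact ⟨id, strictMono_id.strictMonoOn _, rfl, xiFun_eq_self_of_forall_eq_zero hz⟩
  obtain ⟨j0, hj0, hlt⟩ := exists_first_ne_zero hz
  have hr : (j0 : ℕ) + 1 ≠ 0 := Nat.succ_ne_zero _
  have hc (t : Fin (d - 1 - j0)) :
      0 < s ⟨j0 + t, Nat.add_lt_of_lt_sub' t.isLt⟩ ^ ((j0 : ℕ) + 1) :=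
    pow_pos (pos_of_mem_Cd hs hj0 (Fin.le_iff_val_le_val.2 (Nat.le_add_right _ _))) _
  set φ : ℝ → ℝ := fun x => epsFun Fq (j0 + 1) (d - 1 - j0)
    (fun t : Fin (d - 1 - j0) => s ⟨j0 + t, Nat.add_lt_of_lt_sub' t.isLt⟩ ^ ((j0 : ℕ) + 1))
    ((q ^ (k * ((j0 : ℕ) + 1)))⁻¹ * x ^ ((j0 : ℕ) + 1))
  have hφ0 : φ 0 = 0 := by
    simp only [φ, zero_pow hr, mul_zero]
    exact epsFun_of_nonpos (fun t => (hc t).le) le_rfl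
  refine ⟨φ, ?_, hφ0, funext fun i => ?_⟩
  · exact (epsFun_strictMono hr hc).comp_strictMonoOn <|
      (strictMono_mul_left_of_pos (inv_pos.2 (card_pow_pos _))).comp_strictMonoOn
        (pow_left_strictMonoOn₀ hr)
  · rw [xiFun_apply_of_forall_lt hj0 hlt, Function.comp_apply]
    split_ifs with hi
    · rw [hlt i hi, hφ0]
    · rfl

end Xi

section Faces

variable {d : ℕ} {φ : ℝ → ℝ} {s : Fin (d - 1) → ℝ}

lemma padSeq_comp (hφ0 : φ 0 = 0) (s : Fin (d - 1) → ℝ) (j : ℕ) :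
    padSeq d (φ ∘ s) j = φ (padSeq d s j) := by
  unfold padSeq
  split_ifs <;> simp [hφ0]

lemma padSeq_nonneg (hs : ∀ i, 0 ≤ s i) (j : ℕ) : 0 ≤ padSeq d s j := by
  unfold padSeq
  split_ifs
  exacts [hs _, le_rfl]

lemma comp_mem_Cd (hφ : MonotoneOn φ (Set.Ici 0)) (hφ0 : φ 0 = 0) (hs : s ∈ Cd d) :
    φ ∘ s ∈ Cd d :=
  ⟨fun i => hφ0 ▸ hφ Set.self_mem_Ici (hs.1 i) (hs.1 i),
    fun _ _ hab => hφ (hs.1 _) (hs.1 _) (hs.2 hab)⟩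

lemma comp_mem_faceJ_iff (hφ : StrictMonoOn φ (Set.Ici 0)) (hφ0 : φ 0 = 0) (hs : s ∈ Cd d)
    (J : Set ℕ) : φ ∘ s ∈ faceJ d J ↔ s ∈ faceJ d J := by
  simp only [faceJ, Set.mem_ofPred_eq, padSeq_comp hφ0, hs, comp_mem_Cd hφ.monotoneOn hφ0 hs,
    true_and]
  exact forall₂_congr fun j _ => hφ.injOn.eq_iff (padSeq_nonneg hs.1 j) (padSeq_nonneg hs.1 _)

end Faces

section Surjective

variable {d : ℕ} {j0 : Fin (d - 1)} {a : ℝ} {x : ℕ → ℝ}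

def xiPreimage (a : ℝ) (j0 : Fin (d - 1)) (x : ℕ → ℝ) : Fin (d - 1) → ℝ :=
  fun i => if (i : ℕ) < j0 then 0 else a * x (i - j0) ^ (((j0 : ℕ) + 1 : ℕ) : ℝ)⁻¹

lemma xiPreimage_of_lt {i : Fin (d - 1)} (hi : (i : ℕ) < j0) : xiPreimage a j0 x i = 0 :=
  if_pos hi

lemma xiPreimage_pos (ha : 0 < a) (hx : ∀ m, 0 < x m) {i : Fin (d - 1)} (hi : (j0 : ℕ) ≤ i) :
    0 < xiPreimage a j0 x i := by
  rw [xiPreimage, if_neg (not_lt.2 hi)]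
  exact mul_pos ha (Real.rpow_pos_of_pos (hx _) _)

lemma xiPreimage_pow (hx : ∀ m, 0 < x m) {i : Fin (d - 1)} (hi : (j0 : ℕ) ≤ i) :
    xiPreimage a j0 x i ^ ((j0 : ℕ) + 1) = a ^ ((j0 : ℕ) + 1) * x (i - j0) := by
  rw [xiPreimage, if_neg (not_lt.2 hi), mul_pow,
    Real.rpow_inv_natCast_pow (hx _).le (Nat.succ_ne_zero _)]

lemma xiPreimage_mem_Cd (ha : 0 < a) (hx : ∀ m, 0 < x m) (hmono : Monotone x) :
    xiPreimage a j0 x ∈ Cd d := by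
  refine ⟨fun i => ?_, fun b c hbc => ?_⟩
  · rcases lt_or_ge (i : ℕ) j0 with hi | hi
    exacts [(xiPreimage_of_lt hi).ge, (xiPreimage_pos ha hx hi).le]
  rcases lt_or_ge (b : ℕ) j0 with hb | hb
  · rcases lt_or_ge (c : ℕ) j0 with hc | hc
    · rw [xiPreimage_of_lt hb, xiPreimage_of_lt hc]
    · exact (xiPreimage_of_lt hb).trans_le (xiPreimage_pos ha hx hc).le
  · have hc : (j0 : ℕ) ≤ c := hb.trans hbc
    rw [xiPreimage, xiPreimage, if_neg (not_lt.2 hb), if_neg (not_lt.2 hc)]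
    gcongr
    · exact (hx _).le
    · exact hmono (Nat.sub_le_sub_right hbc _)

lemma xiFun_xiPreimage (hx : ∀ m, 0 < x m) (i : Fin (d - 1)) :
    xiFun Fq d 1 (xiPreimage q j0 x) i =
      if (i : ℕ) < j0 then 0
      else epsFun Fq (j0 + 1) (d - 1 - j0) (fun t => q ^ ((j0 : ℕ) + 1) * x t) (x (i - j0)) := by
  rw [xiFun_apply_of_forall_lt (xiPreimage_pos card_pos_real hx le_rfl).ne'
    fun j hj => xiPreimage_of_lt hj]
  split_ifs with hi
  · rfl
  congr 1
  · funext t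
    rw [xiPreimage_pow hx (Nat.le_add_right _ _), Nat.add_sub_cancel_left]
  · rw [one_mul, xiPreimage_pow hx (not_lt.1 hi), inv_mul_cancel_left₀ (card_pow_pos _).ne']

lemma Cd_subset_image_xiFun (d : ℕ) : Cd d ⊆ xiFun Fq d 1 '' Cd d := by
  intro t ht
  by_cases hz : ∃ j, t j ≠ 0
  swap
  · push Not at hz
    exact ⟨t, ht, xiFun_eq_self_of_forall_eq_zero hz⟩
  obtain ⟨j0, hj0, hlt⟩ := exists_first_ne_zero hz
  -- `τ_m = t_{j0+m}`, continued constantly past the last coordinate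
  set τ : ℕ → ℝ := fun m => t ⟨min (j0 + m) (d - 2), by omega⟩
  have hτ (m : ℕ) : 0 < τ m := pos_of_mem_Cd ht hj0 (Fin.le_iff_val_le_val.2 (by simp; omega))
  have hτm : Monotone τ := fun a b hab => ht.2 (Fin.mk_le_mk.2 (by omega))
  have hr : (j0 : ℕ) + 1 ≠ 0 := Nat.succ_ne_zero _
  have hx := fun m => (epsInvSeq_spec (Fq := Fq) hr hτ m).1
  refine ⟨xiPreimage q j0 (epsInvSeq Fq (j0 + 1) τ),
    xiPreimage_mem_Cd card_pos_real hx (epsInvSeq_monotone hr hτ hτm), funext fun i => ?_⟩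
  rw [xiFun_xiPreimage hx]
  split_ifs with hi
  · exact (hlt i hi).symm
  · rw [epsFun_epsInvSeq hr hτ hτm (by omega : (i : ℕ) - j0 ≤ d - 1 - j0)]
    exact congrArg t (Fin.ext (by simp; omega))

end Surjective

theorem statement15_general (Fq : Type) [Field Fq] [Fintype Fq]
    (d : ℕ) (J : Set ℕ) :
    xiFun Fq d 1 '' faceJ d J = faceJ d J := by
  refine Set.Subset.antisymm ?_ fun t ht => ?_
  · rintro _ ⟨s, hs, rfl⟩
    obtain ⟨φ, hφ, hφ0, hξ⟩ := exists_strictMonoOn_xiFun_eq_comp (Fq := Fq) (k := 1) hs.1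
    rw [hξ]
    exact (comp_mem_faceJ_iff hφ hφ0 hs.1 J).2 hs
  · obtain ⟨s, hs, rfl⟩ := Cd_subset_image_xiFun (Fq := Fq) d ht.1
    obtain ⟨φ, hφ, hφ0, hξ⟩ := exists_strictMonoOn_xiFun_eq_comp (Fq := Fq) (k := 1) hs
    rw [hξ] at ht
    exact ⟨s, (comp_mem_faceJ_iff hφ hφ0 hs J).1 ht, rfl⟩

/-- Let `d ≥ 1`.  For every `J ⊆ {0, 1, …, d−2}` the map `ξ^d_1` maps the
face `F_J` of `C_d` onto itself: `ξ^d_1(F_J) = F_J`. -/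
theorem statement15 (Fq : Type) [Field Fq] [Fintype Fq]
    (d : ℕ) (hd : 1 ≤ d) (J : Set ℕ) (hJ : ∀ j ∈ J, j + 2 ≤ d) :
    xiFun Fq d 1 '' faceJ d J = faceJ d J :=
  statement15_general Fq d J
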